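/- Let s ≤ t be positive integers and n, x positive integers with x ≤ n. Then every subgraph of M_{n,x} isomorphic to K_{s,t} has at least s vertices in the clique part A of M_{n,x}. Consequently, M_{n,x} contains at most ⌊x/s⌋ pairwise vertex-disjoint copies of K_{s,t}. -/

import Mathlib

/-- `G` contains `k` pairwise vertex-disjoint copies of `H`:
a family of `k` injective graph homomorphisms from `H` to `G` with
pairwise disjoint images. -/
def HasTiling {α β : Type*} (H : SimpleGraph α) (G : SimpleGraph β) (k : ℕ) : Prop :=
  ∃ f : Fin k → α → β,
    (∀ i, Function.Injective (f i)) ∧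
    (∀ i u v, H.Adj u v → G.Adj (f i u) (f i v)) ∧
    (∀ i j : Fin k, i ≠ j → ∀ u v, f i u ≠ f j v)

/-- The graph `M_{n,x}`: its vertex set is split into the clique part `A`
(the first `x` vertices) and the independent part `B`; all edges between `A`
and `B` are present.  Two distinct vertices are adjacent iff one lies in `A`. -/
def Mgraph (n x : ℕ) : SimpleGraph (Fin n) where
  Adj u v := u ≠ v ∧ ((u : ℕ) < x ∨ (v : ℕ) < x)
  symm := ⟨by rintro u v ⟨h1, h2⟩; exact ⟨h1.symm, h2.symm⟩⟩
  loopless := ⟨fun v h => h.1 rfl⟩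

/-- Every copy of `K_{s,t}` (with `s ≤ t`) in `M_{n,x}` has at least `s` vertices in
the clique part `A`; consequently `M_{n,x}` contains at most `⌊x/s⌋` pairwise
vertex-disjoint copies of `K_{s,t}`. -/
theorem Mgraph_copies (s t n x : ℕ) (hs : 0 < s) (hst : s ≤ t)
    (hx : 0 < x) (hxn : x ≤ n) :
    (∀ f : Fin s ⊕ Fin t → Fin n, Function.Injective f →
      (∀ u v, (completeBipartiteGraph (Fin s) (Fin t)).Adj u v →
        (Mgraph n x).Adj (f u) (f v)) →
      s ≤ (Finset.univ.filter fun u : Fin s ⊕ Fin t => ((f u : ℕ) < x)).card) ∧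
    (∀ k : ℕ, HasTiling (completeBipartiteGraph (Fin s) (Fin t)) (Mgraph n x) k →
      k ≤ x / s) := by
  have key : ∀ f : Fin s ⊕ Fin t → Fin n, Function.Injective f →
      (∀ u v, (completeBipartiteGraph (Fin s) (Fin t)).Adj u v →
        (Mgraph n x).Adj (f u) (f v)) →
      s ≤ (Finset.univ.filter fun u : Fin s ⊕ Fin t => ((f u : ℕ) < x)).card := by
    intro f hf hadj
    by_cases h : ∀ i : Fin s, ((f (Sum.inl i) : ℕ) < x)
    · have hsub : (Finset.univ.image (Sum.inl : Fin s → Fin s ⊕ Fin t)) ⊆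
          Finset.univ.filter fun u => ((f u : ℕ) < x) := by
        intro u hu
        simp only [Finset.mem_image] at hu
        obtain ⟨i, _, rfl⟩ := hu
        simp [h i]
      calc s = (Finset.univ.image (Sum.inl : Fin s → Fin s ⊕ Fin t)).card := by
              rw [Finset.card_image_of_injective _ Sum.inl_injective]; simp
        _ ≤ _ := Finset.card_le_card hsub
    · push_neg at h
      obtain ⟨i, hi⟩ := h
      have hall : ∀ j : Fin t, ((f (Sum.inr j) : ℕ) < x) := by
        intro j
        have := hadj (Sum.inl i) (Sum.inr j) (by simp)
        rcases (this : f (Sum.inl i) ≠ f (Sum.inr j) ∧ (((f (Sum.inl i)) : ℕ) < x ∨ ((f (Sum.inr j)) : ℕ) < x)).2 with h1 | h2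
        · exact absurd h1 (Nat.not_lt.mpr hi)
        · exact h2
      have hsub : (Finset.univ.image (Sum.inr : Fin t → Fin s ⊕ Fin t)) ⊆
          Finset.univ.filter fun u => ((f u : ℕ) < x) := by
        intro u hu
        simp only [Finset.mem_image] at hu
        obtain ⟨j, _, rfl⟩ := hu
        simp [hall j]
      calc s ≤ t := hst
        _ = (Finset.univ.image (Sum.inr : Fin t → Fin s ⊕ Fin t)).card := by
              rw [Finset.card_image_of_injective _ Sum.inr_injective]; simp
        _ ≤ _ := Finset.card_le_card hsub
  refine ⟨key, ?_⟩
  rintro k ⟨f, hinj, hhom, hdisj⟩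
  set A' : Finset (Fin n) := Finset.univ.filter (fun v : Fin n => (v : ℕ) < x) with hA'
  have hA'card : A'.card = x := by
    have : A' = Finset.univ.image (Fin.castLE hxn) := by
      ext v
      simp only [hA', Finset.mem_filter, Finset.mem_image, Finset.mem_univ, true_and]
      constructor
      · intro hv
        exact ⟨⟨(v : ℕ), hv⟩, by ext; simp⟩
      · rintro ⟨i, rfl⟩
        exact i.2
    rw [this, Finset.card_image_of_injective _ (Fin.castLE_injective hxn)]
    simp
  set T : Fin k → Finset (Fin n) :=
    fun i => (Finset.univ.filter fun u => ((f i u : ℕ) < x)).image (f i) with hT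
  have hTcard : ∀ i : Fin k, s ≤ (T i).card := by
    intro i
    rw [hT]
    rw [Finset.card_image_of_injective _ (hinj i)]
    exact key (f i) (hinj i) (hhom i)
  have hdisj' : ∀ i ∈ (Finset.univ : Finset (Fin k)), ∀ j ∈ Finset.univ, i ≠ j →
      Disjoint (T i) (T j) := by
    intro i _ j _ hij
    rw [Finset.disjoint_left]
    intro v hvi hvj
    simp only [hT, Finset.mem_image] at hvi hvj
    obtain ⟨u, _, rfl⟩ := hvi
    obtain ⟨w, _, hw⟩ := hvj
    exact hdisj j i (Ne.symm hij) w u hw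
  have hsub : (Finset.univ.biUnion T) ⊆ A' := by
    intro v hv
    simp only [Finset.mem_biUnion, hT, Finset.mem_image, Finset.mem_filter] at hv
    obtain ⟨i, _, u, ⟨_, hu⟩, rfl⟩ := hv
    simp [hA', hu]
  have hle : ∑ i : Fin k, (T i).card ≤ x := by
    rw [← Finset.card_biUnion hdisj', ← hA'card]
    exact Finset.card_le_card hsub
  have hks : k * s ≤ x := by
    calc k * s = (Finset.univ : Finset (Fin k)).card • s := by simp [mul_comm]
      _ ≤ ∑ i : Fin k, (T i).card :=
          Finset.card_nsmul_le_sum _ _ _ (fun i _ => hTcard i)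
      _ ≤ x := hle
  exact (Nat.le_div_iff_mul_le hs).mpr hks
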